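/- arXiv:1511.03916 — 4 statements merged into one kernel-verified Lean document; each statement's English description precedes it below -/
import Mathlib

section
/- Let τ > 0 and define s_τ(x) = 1 + τ(|x| - x₁) for x ∈ ℝ³. Then there is a constant C > 0 depending only on τ such that for all x, z ∈ ℝ³: s_τ(z)⁻¹ ≤ C (1 + |x - z|) s_τ(x)⁻¹. -/
noncomputable def sTau (τ : ℝ) (x : EuclideanSpace ℝ (Fin 3)) : ℝ := 1 + τ * (‖x‖ - x 0)

lemma coord_abs_le_norm (y : EuclideanSpace ℝ (Fin 3)) : |y 0| ≤ ‖y‖ := by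
  rw [EuclideanSpace.norm_eq]
  have h : ‖y 0‖ ^ 2 ≤ ∑ i, ‖y i‖ ^ 2 :=
    Finset.single_le_sum (f := fun i => ‖y i‖ ^ 2) (fun i _ => by positivity)
      (Finset.mem_univ 0)
  have := Real.sqrt_le_sqrt h
  simpa [Real.sqrt_sq_eq_abs] using this

theorem sTau_inv_le (τ : ℝ) (hτ : 0 < τ) :
    ∃ C : ℝ, 0 < C ∧ ∀ x z : EuclideanSpace ℝ (Fin 3),
      (sTau τ z)⁻¹ ≤ C * (1 + ‖x - z‖) * (sTau τ x)⁻¹ := by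
  refine ⟨1 + 2 * τ, by linarith, fun x z => ?_⟩
  have h1 : ∀ y : EuclideanSpace ℝ (Fin 3), 1 ≤ sTau τ y := by
    intro y
    have := coord_abs_le_norm y
    have := le_abs_self (y 0)
    unfold sTau
    nlinarith
  have hz : (0:ℝ) < sTau τ z := lt_of_lt_of_le one_pos (h1 z)
  have hx : (0:ℝ) < sTau τ x := lt_of_lt_of_le one_pos (h1 x)
  have hd : (0:ℝ) ≤ ‖x - z‖ := norm_nonneg _
  have hn : ‖x‖ - ‖z‖ ≤ ‖x - z‖ := norm_sub_norm_le x z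
  have hc : z 0 - x 0 ≤ ‖x - z‖ := by
    have h := coord_abs_le_norm (x - z)
    have h2 : (x - z) 0 = x 0 - z 0 := rfl
    rw [h2] at h
    have := neg_abs_le (x 0 - z 0)
    linarith [this, h]
  have key : sTau τ x ≤ (1 + 2 * τ) * (1 + ‖x - z‖) * sTau τ z := by
    have hsx : sTau τ x ≤ sTau τ z + 2 * τ * ‖x - z‖ := by
      unfold sTau; nlinarith
    nlinarith [h1 z, mul_nonneg hτ.le hd]
  rw [inv_eq_one_div, inv_eq_one_div, mul_one_div, div_le_div_iff₀ hz hx]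
  nlinarith
end

section
/- Let β > 1 and τ > 0. There is a constant C(β, τ) > 0 such that for every r > 0 the surface integral over the sphere ∂B_r = {x ∈ ℝ³ : |x| = r} satisfies ∫_{∂B_r} s_τ(x)^{-β} do_x ≤ C(β, τ) · r. -/
/-
On the sphere of radius `r` we have `sTau τ x = 1 + τ (r - x 0)`, so everything rests on the area
of the caps `{r - x 0 ≤ s}`, which is `O(r s)`. For `s ≤ r / 2` the cap projects centrally into a
square of side `O(√(r s))` in the tangent plane at `r e₀`, and central projection onto the sphere
from outside the ball is `2`-Lipschitz; for larger `s` the whole sphere, covered by six such cones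
over faces of the circumscribed cube, has area `O(r²) = O(r s)`. Splitting the sphere into the
dyadic layers `2ᵏ ≤ sTau τ < 2ᵏ⁺¹`, of area `O(2ᵏ r / τ)` and weight `2^(-kβ)`, gives a geometric
series, which converges because `β > 1`.
-/

open MeasureTheory

open Set Metric
open scoped ENNReal NNReal

lemma lintegral_rpow_neg_le_of_measure_le {α : Type*} [MeasurableSpace α] {μ : Measure α}
    {g : α → ℝ} (hg : Measurable g) (hg1 : ∀ x, 1 ≤ g x) {β K : ℝ} (hβ : 1 < β) (hK : 0 ≤ K)
    (hμ : ∀ s, 1 ≤ s → μ {x | g x ≤ s} ≤ ENNReal.ofReal (K * s)) :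
    ∫⁻ x, ENNReal.ofReal (g x ^ (-β)) ∂μ ≤ ENNReal.ofReal (2 * K / (1 - 2 ^ (1 - β))) := by
  set q : ℝ := 2 ^ (-β)
  have h2q : 2 * q = 2 ^ (1 - β) := by
    rw [sub_eq_add_neg, Real.rpow_add two_pos, Real.rpow_one]
  have h2q1 : 2 * q < 1 := h2q ▸ Real.rpow_lt_one_of_one_lt_of_neg one_lt_two (by linarith)
  set D : ℕ → Set α := fun k => {x | g x ≤ 2 ^ (k + 1)}
  have hD : ∀ k, MeasurableSet (D k) := fun k => measurableSet_le hg measurable_const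
  have hpt : ∀ x, ENNReal.ofReal (g x ^ (-β)) ≤
      ∑' k, (D k).indicator (fun _ => ENNReal.ofReal (q ^ k)) x := by
    intro x
    obtain ⟨k, hk, hk'⟩ := exists_nat_pow_near (hg1 x) one_lt_two
    calc ENNReal.ofReal (g x ^ (-β)) ≤ ENNReal.ofReal (q ^ k) := by
          rw [Real.rpow_pow_comm zero_le_two]
          exact ENNReal.ofReal_le_ofReal
            (Real.rpow_le_rpow_of_nonpos (by positivity) hk (by linarith))
      _ = (D k).indicator (fun _ => ENNReal.ofReal (q ^ k)) x :=
          (indicator_of_mem (show x ∈ D k from hk'.le) (fun _ => ENNReal.ofReal (q ^ k))).symm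
      _ ≤ _ := ENNReal.le_tsum k
  have hterm : ∀ k : ℕ,
      ENNReal.ofReal (q ^ k) * μ (D k) ≤ ENNReal.ofReal (2 * K * (2 * q) ^ k) := by
    intro k
    calc ENNReal.ofReal (q ^ k) * μ (D k)
        ≤ ENNReal.ofReal (q ^ k) * ENNReal.ofReal (K * 2 ^ (k + 1)) := by
          gcongr; exact hμ _ (one_le_pow₀ one_le_two)
      _ = ENNReal.ofReal (2 * K * (2 * q) ^ k) := by
          rw [← ENNReal.ofReal_mul (by positivity)]; ring_nf
  calc ∫⁻ x, ENNReal.ofReal (g x ^ (-β)) ∂μ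
      ≤ ∫⁻ x, ∑' k, (D k).indicator (fun _ => ENNReal.ofReal (q ^ k)) x ∂μ := lintegral_mono hpt
    _ = ∑' k, ENNReal.ofReal (q ^ k) * μ (D k) := by
        rw [lintegral_tsum fun k => (measurable_const.indicator (hD k)).aemeasurable]
        simp only [lintegral_indicator_const (hD _)]
    _ ≤ ∑' k, ENNReal.ofReal (2 * K * (2 * q) ^ k) := ENNReal.tsum_le_tsum hterm
    _ = ENNReal.ofReal (2 * K / (1 - 2 ^ (1 - β))) := by
        rw [← ENNReal.ofReal_tsum_of_nonneg (fun k => by positivity)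
          ((summable_geometric_of_lt_one (by positivity) h2q1).mul_left _), tsum_mul_left,
          tsum_geometric_of_lt_one (by positivity) h2q1, h2q, div_eq_mul_inv]

lemma norm_div_norm_smul_sub_div_norm_smul_le {E : Type*} [NormedAddCommGroup E] [NormedSpace ℝ E]
    {r : ℝ} (hr : 0 < r) {a b : E} (ha : r ≤ ‖a‖) (hb : r ≤ ‖b‖) :
    ‖(r / ‖a‖) • a - (r / ‖b‖) • b‖ ≤ 2 * ‖a - b‖ := by
  have ha0 : 0 < ‖a‖ := hr.trans_le ha
  have hb0 : 0 < ‖b‖ := hr.trans_le hb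
  have hra : r / ‖a‖ ≤ 1 := (div_le_one ha0).2 ha
  have hsplit : (r / ‖a‖) • a - (r / ‖b‖) • b = (r / ‖a‖) • (a - b) + (r / ‖a‖ - r / ‖b‖) • b := by
    rw [smul_sub, sub_smul]; abel
  have hcoef : |r / ‖a‖ - r / ‖b‖| * ‖b‖ = r / ‖a‖ * |‖b‖ - ‖a‖| := by
    rw [show r / ‖a‖ - r / ‖b‖ = r / ‖a‖ * (‖b‖ - ‖a‖) / ‖b‖ by field_simp, abs_div, abs_mul,
      abs_of_pos hb0, abs_of_pos (div_pos hr ha0)]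
    field_simp
  calc ‖(r / ‖a‖) • a - (r / ‖b‖) • b‖
      ≤ r / ‖a‖ * ‖a - b‖ + r / ‖a‖ * |‖b‖ - ‖a‖| := by
        rw [hsplit, ← hcoef]
        refine (norm_add_le _ _).trans_eq ?_
        rw [norm_smul, norm_smul, Real.norm_of_nonneg (div_pos hr ha0).le, Real.norm_eq_abs]
    _ ≤ 1 * ‖a - b‖ + 1 * ‖a - b‖ := by
        gcongr
        rw [abs_sub_comm]; exact abs_norm_sub_norm_le a b
    _ = 2 * ‖a - b‖ := by ring

section Sphere

variable {n : ℕ}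

/-- Central projection onto the sphere of radius `r` of the tangent plane `{y | y i = σ r}`,
parametrized by the remaining coordinates. -/
noncomputable def sphereChart (r σ : ℝ) (i : Fin (n + 1)) (p : Fin n → ℝ) :
    EuclideanSpace ℝ (Fin (n + 1)) :=
  let y := WithLp.toLp 2 (i.insertNth (α := fun _ => ℝ) (σ * r) p)
  (r / ‖y‖) • y

lemma lipschitzWith_sphereChart {r σ : ℝ} (hr : 0 < r) (hσ : |σ| = 1) (i : Fin (n + 1)) :
    LipschitzWith (2 * NNReal.sqrt (n + 1)) (sphereChart r σ i) := by
  set y : (Fin n → ℝ) → EuclideanSpace ℝ (Fin (n + 1)) :=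
    fun p => WithLp.toLp 2 (i.insertNth (α := fun _ => ℝ) (σ * r) p)
  have hy : LipschitzWith (NNReal.sqrt (n + 1)) y := by
    have hins : LipschitzWith 1 (i.insertNth (α := fun _ => ℝ) (σ * r)) :=
      LipschitzWith.of_dist_le_mul fun p q => by simp [Fin.dist_insertNth_insertNth]
    convert (PiLp.lipschitzWith_toLp 2 fun _ : Fin (n + 1) => ℝ).comp hins using 1
    · simp [NNReal.sqrt_eq_rpow]
    · rfl
  have hry : ∀ p, r ≤ ‖y p‖ := fun p => by
    simpa [y, abs_mul, hσ, abs_of_pos hr] using PiLp.norm_apply_le (y p) i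
  refine LipschitzWith.of_dist_le_mul fun p q => ?_
  change ‖(r / ‖y p‖) • y p - (r / ‖y q‖) • y q‖ ≤ _
  calc _ ≤ 2 * ‖y p - y q‖ := norm_div_norm_smul_sub_div_norm_smul_le hr (hry p) (hry q)
    _ ≤ 2 * (NNReal.sqrt (n + 1) * dist p q) := by
        rw [← dist_eq_norm]; gcongr; exact hy.dist_le_mul p q
    _ = ↑(2 * NNReal.sqrt (n + 1)) * dist p q := by push_cast; ring

/-- The points of the sphere of radius `r` whose central projection onto the tangent plane at
`σ r eᵢ` lies in the cube `[-ρ, ρ]ⁿ`. -/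
def sphereCone (r σ ρ : ℝ) (i : Fin (n + 1)) : Set (EuclideanSpace ℝ (Fin (n + 1))) :=
  {x | x ∈ sphere 0 r ∧ 0 < σ * x i ∧ ∀ j, r * |x (i.succAbove j)| ≤ ρ * (σ * x i)}

lemma sphereCone_subset_image_sphereChart {r σ ρ : ℝ} (hr : 0 < r) (hσ : |σ| = 1)
    (i : Fin (n + 1)) :
    sphereCone r σ ρ i ⊆ sphereChart r σ i '' univ.pi fun _ => Icc (-ρ) ρ := by
  rintro x ⟨hx, hxi, hcone⟩
  rw [mem_sphere_zero_iff_norm] at hx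
  have hσσ : σ * σ = 1 := by rw [← abs_mul_abs_self, hσ, one_mul]
  set c := r / (σ * x i)
  have hc : 0 < c := div_pos hr hxi
  refine ⟨fun j => c * x (i.succAbove j), fun j _ => abs_le.1 ?_, ?_⟩
  · rw [abs_mul, abs_of_pos hc, div_mul_eq_mul_div, div_le_iff₀ hxi]
    exact hcone j
  · have hy : WithLp.toLp 2 (i.insertNth (α := fun _ => ℝ) (σ * r) fun j => c * x (i.succAbove j))
        = c • x := by
      ext k
      rcases i.eq_self_or_eq_succAbove k with rfl | ⟨j, rfl⟩
      · simp only [Fin.insertNth_apply_same, PiLp.smul_apply, smul_eq_mul, c]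
        rw [div_mul_eq_mul_div, eq_div_iff hxi.ne']
        linear_combination r * x k * hσσ
      · simp [c]
    change (r / ‖_‖) • _ = x
    rw [hy, norm_smul, Real.norm_of_nonneg hc.le, hx, smul_smul,
      div_mul_cancel_right₀ hr.ne', inv_mul_cancel₀ hc.ne', one_smul]

lemma hausdorffMeasure_sphereCone_le {r σ ρ : ℝ} (hr : 0 < r) (hσ : |σ| = 1) (hρ : 0 ≤ ρ)
    (i : Fin (n + 1)) :
    μH[n] (sphereCone r σ ρ i) ≤ ENNReal.ofReal ((4 * √(n + 1) * ρ) ^ n) := by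
  have hvol : (μH[n] : Measure (Fin n → ℝ)) = volume := by
    simpa using hausdorffMeasure_pi_real (ι := Fin n)
  calc μH[n] (sphereCone r σ ρ i)
      ≤ μH[n] (sphereChart r σ i '' univ.pi fun _ => Icc (-ρ) ρ) :=
        measure_mono (sphereCone_subset_image_sphereChart hr hσ i)
    _ ≤ (2 * NNReal.sqrt (n + 1) : ℝ≥0) ^ (n : ℝ) * μH[n] (univ.pi fun _ : Fin n => Icc (-ρ) ρ) :=
        (lipschitzWith_sphereChart hr hσ i).hausdorffMeasure_image_le n.cast_nonneg _
    _ = ENNReal.ofReal ((4 * √(n + 1) * ρ) ^ n) := by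
        rw [hvol, volume_pi_pi, ENNReal.rpow_natCast]
        simp only [Real.volume_Icc, Finset.prod_const, Finset.card_univ, Fintype.card_fin]
        rw [← ENNReal.ofReal_coe_nnreal, ← ENNReal.ofReal_pow (by positivity),
          ← ENNReal.ofReal_pow (by linarith), ← ENNReal.ofReal_mul (by positivity), ← mul_pow]
        congr 2
        push_cast
        ring

lemma sphere_subset_iUnion_sphereCone {r : ℝ} (hr : 0 < r) :
    sphere (0 : EuclideanSpace ℝ (Fin (n + 1))) r ⊆
      ⋃ i, (sphereCone r 1 r i ∪ sphereCone r (-1) r i) := by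
  intro x hx
  obtain ⟨i, -, hmax⟩ := Finset.exists_max_image Finset.univ (fun k => |x k|) Finset.univ_nonempty
  have hxi : x i ≠ 0 := by
    intro h0
    have : x = 0 := by
      ext k
      simpa [h0] using hmax k (Finset.mem_univ k)
    rw [this, mem_sphere_zero_iff_norm, norm_zero] at hx
    exact hr.ne hx
  have hcone : ∀ σ : ℝ, σ * x i = |x i| → x ∈ sphereCone r σ r i := fun σ hσ =>
    ⟨hx, hσ ▸ abs_pos.2 hxi,
      fun j => hσ ▸ mul_le_mul_of_nonneg_left (hmax _ (Finset.mem_univ _)) hr.le⟩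
  refine mem_iUnion.2 ⟨i, ?_⟩
  rcases hxi.lt_or_gt with hneg | hpos
  · exact Or.inr (hcone (-1) (by rw [abs_of_neg hneg]; ring))
  · exact Or.inl (hcone 1 (by rw [abs_of_pos hpos]; ring))

lemma hausdorffMeasure_sphere_le {r : ℝ} (hr : 0 < r) :
    μH[n] (sphere (0 : EuclideanSpace ℝ (Fin (n + 1))) r) ≤
      ENNReal.ofReal (2 * (n + 1) * (4 * √(n + 1) * r) ^ n) := by
  have hcone : ∀ σ : ℝ, |σ| = 1 → ∀ i : Fin (n + 1),
      μH[n] (sphereCone r σ r i) ≤ ENNReal.ofReal ((4 * √(n + 1) * r) ^ n) :=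
    fun σ hσ i => hausdorffMeasure_sphereCone_le hr hσ hr.le i
  calc μH[n] (sphere (0 : EuclideanSpace ℝ (Fin (n + 1))) r)
      ≤ ∑ i : Fin (n + 1), (μH[n] (sphereCone r 1 r i) + μH[n] (sphereCone r (-1) r i)) :=
        (measure_mono (sphere_subset_iUnion_sphereCone hr)).trans <|
          (measure_iUnion_fintype_le _ _).trans <|
            Finset.sum_le_sum fun i _ => measure_union_le _ _
    _ ≤ ∑ _i : Fin (n + 1), 2 * ENNReal.ofReal ((4 * √(n + 1) * r) ^ n) := by
        gcongr with i
        rw [two_mul]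
        gcongr
        exacts [hcone 1 (by simp) i, hcone (-1) (by simp) i]
    _ = ENNReal.ofReal (2 * (n + 1) * (4 * √(n + 1) * r) ^ n) := by
        rw [Finset.sum_const, Finset.card_univ, Fintype.card_fin, nsmul_eq_mul,
          ENNReal.ofReal_mul (by positivity), ENNReal.ofReal_mul (by positivity),
          ENNReal.ofReal_ofNat, ← Nat.cast_succ, ENNReal.ofReal_natCast]
        ring

lemma sphere_cap_subset_sphereCone {r s : ℝ} (hr : 0 < r) (hs : 0 ≤ s) (hsr : s ≤ r / 2) :
    {x ∈ sphere (0 : EuclideanSpace ℝ (Fin (n + 1))) r | r - x 0 ≤ s} ⊆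
      sphereCone r 1 (2 * √(2 * r * s)) 0 := by
  rintro x ⟨hx, hcap⟩
  have hnorm : x 0 ^ 2 + ∑ j : Fin n, x j.succ ^ 2 = r ^ 2 := by
    rw [← Fin.sum_univ_succ (fun k => x k ^ 2), ← EuclideanSpace.real_norm_sq_eq,
      mem_sphere_zero_iff_norm.1 hx]
  have hx0 : r / 2 ≤ x 0 := by linarith
  refine ⟨hx, by linarith, fun j => ?_⟩
  have hxj : x j.succ ^ 2 ≤ 2 * r * s := by
    have := Finset.single_le_sum (fun k _ => sq_nonneg (x (Fin.succ k))) (Finset.mem_univ j)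
    nlinarith
  rw [Fin.succAbove_zero, one_mul]
  calc r * |x j.succ| ≤ (2 * x 0) * √(2 * r * s) :=
        mul_le_mul (by linarith) (Real.abs_le_sqrt hxj) (abs_nonneg _) (by linarith)
    _ = 2 * √(2 * r * s) * x 0 := by ring

lemma hausdorffMeasure_sphere_cap_le {r s : ℝ} (hr : 0 < r) (hs : 0 ≤ s) :
    μH[n] {x ∈ sphere (0 : EuclideanSpace ℝ (Fin (n + 1))) r | r - x 0 ≤ s} ≤
      ENNReal.ofReal (2 * (n + 1) * (8 * √(n + 1) * √(2 * r * s)) ^ n) := by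
  rcases le_or_gt s (r / 2) with hsr | hsr
  · refine (measure_mono (sphere_cap_subset_sphereCone hr hs hsr)).trans <|
      (hausdorffMeasure_sphereCone_le hr (by simp) (by positivity) 0).trans <|
        ENNReal.ofReal_le_ofReal ?_
    rw [show 4 * √(n + 1) * (2 * √(2 * r * s)) = 8 * √(n + 1) * √(2 * r * s) by ring]
    exact le_mul_of_one_le_left (by positivity) (by linarith [n.cast_nonneg (α := ℝ)])
  · refine (measure_mono (sep_subset _ _)).trans <| (hausdorffMeasure_sphere_le hr).trans <|
      ENNReal.ofReal_le_ofReal ?_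
    have hr_le : r ≤ √(2 * r * s) := Real.le_sqrt_of_sq_le (by nlinarith)
    gcongr
    linarith [Real.sqrt_nonneg (n + 1 : ℝ)]

end Sphere

lemma one_le_sTau {τ : ℝ} (hτ : 0 ≤ τ) (x : EuclideanSpace ℝ (Fin 3)) : 1 ≤ sTau τ x := by
  have hx : x 0 ≤ ‖x‖ := (le_abs_self _).trans (PiLp.norm_apply_le x 0)
  have := mul_nonneg hτ (sub_nonneg.2 hx)
  unfold sTau
  linarith

lemma continuous_sTau (τ : ℝ) : Continuous (sTau τ) := by
  unfold sTau; fun_prop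

lemma hausdorffMeasure_restrict_sphere_setOf_sTau_le {τ r s : ℝ} (hτ : 0 < τ) (hr : 0 < r)
    (hs : 0 ≤ s) :
    (μH[2].restrict (sphere (0 : EuclideanSpace ℝ (Fin 3)) r)) {x | sTau τ x ≤ s} ≤
      ENNReal.ofReal (2304 * r / τ * s) := by
  rw [Measure.restrict_apply' isClosed_sphere.measurableSet]
  have hsub : {x | sTau τ x ≤ s} ∩ sphere (0 : EuclideanSpace ℝ (Fin 3)) r ⊆
      {x ∈ sphere 0 r | r - x 0 ≤ s / τ} := by
    rintro x ⟨hxs, hx⟩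
    refine ⟨hx, ?_⟩
    rw [le_div_iff₀ hτ]
    simp only [mem_ofPred_eq, sTau, mem_sphere_zero_iff_norm.1 hx] at hxs
    linarith
  have hcap : μH[2] {x ∈ sphere (0 : EuclideanSpace ℝ (Fin 3)) r | r - x 0 ≤ s / τ} ≤
      ENNReal.ofReal (2 * (2 + 1) * (8 * √(2 + 1) * √(2 * r * (s / τ))) ^ 2) := by
    exact_mod_cast hausdorffMeasure_sphere_cap_le (n := 2) hr (div_nonneg hs hτ.le)
  refine (measure_mono hsub).trans (hcap.trans_eq ?_)
  rw [mul_pow, mul_pow, Real.sq_sqrt (by norm_num), Real.sq_sqrt (by positivity)]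
  ring_nf

theorem sphere_integral_sTau_le (β τ : ℝ) (hβ : 1 < β) (hτ : 0 < τ) :
    ∃ C : ℝ, 0 < C ∧ ∀ r : ℝ, 0 < r →
      ∫ x in Metric.sphere (0 : EuclideanSpace ℝ (Fin 3)) r,
        (sTau τ x) ^ (-β) ∂(μH[2]) ≤ C * r := by
  have hq : (2 : ℝ) ^ (1 - β) < 1 := Real.rpow_lt_one_of_one_lt_of_neg one_lt_two (by linarith)
  refine ⟨2 * (2304 / τ) / (1 - 2 ^ (1 - β)), div_pos (by positivity) (by linarith),
    fun r hr => ?_⟩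
  have hlint := lintegral_rpow_neg_le_of_measure_le (continuous_sTau τ).measurable
    (one_le_sTau hτ.le) hβ (by positivity) fun _ hs =>
      hausdorffMeasure_restrict_sphere_setOf_sTau_le hτ hr (zero_le_one.trans hs)
  have hnonneg : ∀ x, 0 ≤ sTau τ x ^ (-β) := fun x =>
    Real.rpow_nonneg (zero_le_one.trans (one_le_sTau hτ.le x)) _
  calc ∫ x in sphere 0 r, sTau τ x ^ (-β) ∂μH[2]
      ≤ (∫⁻ x in sphere 0 r, ENNReal.ofReal ‖sTau τ x ^ (-β)‖ ∂μH[2]).toReal :=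
        (Real.le_norm_self _).trans (norm_integral_le_lintegral_norm _)
    _ ≤ 2 * (2304 / τ) / (1 - 2 ^ (1 - β)) * r := by
        simp only [Real.norm_of_nonneg (hnonneg _)]
        refine ENNReal.toReal_le_of_le_ofReal (by positivity) (hlint.trans_eq ?_)
        congr 1; ring
end

section
/- Let ν > 1, τ > 0, and 0 < S₁ < S. Let Ω ∈ ℝ^{3×3} be skew-symmetric. Then there is a constant C(S₁, S, ν, τ) > 0 such that for all y ∈ ℝ³ with |y| ≥ S and all z ∈ ℝ³ with |z| ≤ S₁: ∫₀^∞ (|y − τ t e₁ − e^{−tΩ} z|² + t)^{−ν} dt ≤ C(S₁, S, ν, τ) · (|y| · s_τ(y))^{−ν + 1/2}. -/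
open NormedSpace MeasureTheory Matrix

noncomputable def toE3 (v : Fin 3 → ℝ) : EuclideanSpace ℝ (Fin 3) :=
  (EuclideanSpace.equiv (Fin 3) ℝ).symm v

/-!
Write `g = |y - τ t e₁|` and `d = |y - τ t e₁ - e^{-tΩ} z|`. Since `e^{-tΩ}` is orthogonal,
`g ≤ d + S₁`. For small times (`2 τ t ≤ S - S₁`) this forces `d ≳ |y|`, while for large times `t`
itself is bounded below; in both regimes `g² + |y| ≲ d² + t`. As `(y₁ - τ t)² ≤ g²` and
`|y| (|y| - y₁) ≤ 2 g²`, the integrand is dominated by a multiple of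
`((y₁ - τ t)² + |y| s_τ(y))^{-ν}`, whose integral over the whole line is
`τ⁻¹ (|y| s_τ(y))^{1/2 - ν} ∫ (1 + v²)^{-ν} dv` by an affine change of variables.
-/

open scoped RealInnerProductSpace

theorem Matrix.transpose_exp_mul_exp_of_transpose_eq_neg {m : Type*} [Fintype m] [DecidableEq m]
    {A : Matrix m m ℝ} (hA : Aᵀ = -A) : (exp A)ᵀ * exp A = 1 := by
  rw [← Matrix.exp_transpose, hA, ← Matrix.exp_add_of_commute _ _ (Commute.refl A).neg_left,
    neg_add_cancel, exp_zero]

theorem EuclideanSpace.norm_toLp_mulVec_of_transpose_mul_self {m : Type*} [Fintype m]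
    [DecidableEq m] {M : Matrix m m ℝ} (hM : Mᵀ * M = 1) (v : EuclideanSpace ℝ m) :
    ‖WithLp.toLp 2 (M *ᵥ v)‖ = ‖v‖ := by
  have h : ∀ x : EuclideanSpace ℝ m, ‖x‖ ^ 2 = x.ofLp ⬝ᵥ x.ofLp := fun x => by
    rw [← real_inner_self_eq_norm_sq, EuclideanSpace.inner_eq_star_dotProduct, star_trivial]
  rw [← sq_eq_sq₀ (norm_nonneg _) (norm_nonneg _), h, h, dotProduct_mulVec, ← mulVec_transpose,
    mulVec_mulVec, hM, one_mulVec]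

section Geometry

variable {E : Type*} [NormedAddCommGroup E] [InnerProductSpace ℝ E] {e : E}

theorem norm_sub_smul_sq_eq (he : ‖e‖ = 1) (y : E) (s : ℝ) :
    ‖y - s • e‖ ^ 2 = ‖y‖ ^ 2 - 2 * s * ⟪y, e⟫ + s ^ 2 := by
  rw [norm_sub_sq_real, real_inner_smul_right, norm_smul, he, mul_one, Real.norm_eq_abs, sq_abs]
  ring

theorem sq_inner_sub_le_norm_sub_smul_sq (he : ‖e‖ = 1) (y : E) (s : ℝ) :
    (⟪y, e⟫ - s) ^ 2 ≤ ‖y - s • e‖ ^ 2 := by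
  have h : ⟪y - s • e, e⟫ = ⟪y, e⟫ - s := by
    rw [inner_sub_left, real_inner_smul_left, real_inner_self_eq_norm_sq, he]; ring
  rw [← h, ← sq_abs]
  exact pow_le_pow_left₀ (abs_nonneg _)
    ((abs_real_inner_le_norm _ _).trans_eq (by rw [he, mul_one])) 2

theorem norm_mul_sub_inner_le (he : ‖e‖ = 1) (y : E) {s : ℝ} (hs : 0 ≤ s) :
    ‖y‖ * (‖y‖ - ⟪y, e⟫) ≤ 2 * ‖y - s • e‖ ^ 2 := by
  have hye : |⟪y, e⟫| ≤ ‖y‖ := (abs_real_inner_le_norm _ _).trans_eq (by rw [he, mul_one])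
  rw [norm_sub_smul_sq_eq he]
  rcases le_total 0 ⟪y, e⟫ with h | h <;> nlinarith [abs_le.mp hye, sq_nonneg (⟪y, e⟫ - s)]

theorem sq_inner_sub_add_norm_mul_le {τ s : ℝ} (he : ‖e‖ = 1) (hτ : 0 ≤ τ) (hs : 0 ≤ s) (y : E) :
    (⟪y, e⟫ - s) ^ 2 + ‖y‖ * (1 + τ * (‖y‖ - ⟪y, e⟫)) ≤ (1 + 2 * τ) * (‖y - s • e‖ ^ 2 + ‖y‖) := by
  nlinarith [sq_inner_sub_le_norm_sub_smul_sq he y s, norm_mul_sub_inner_le he y hs,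
    mul_nonneg hτ (norm_nonneg y)]

end Geometry

section Displacement

variable {S₁ S r g d s : ℝ}

theorem sq_add_le_mul_sq_of_small_shift (hS₁ : 0 ≤ S₁) (hS : S₁ < S) (hr : S ≤ r)
    (hrg : r ≤ g + s) (hgr : g ≤ r + s) (hgd : g ≤ d + S₁) (hsS : 2 * s ≤ S - S₁) :
    (S - S₁) ^ 2 * (g ^ 2 + r) ≤ 4 * S * (4 * S + 1) * d ^ 2 := by
  have hS0 : 0 < S := by linarith
  have hrd : (S - S₁) * r ≤ 2 * S * d := by nlinarith
  have hrd2 : ((S - S₁) * r) ^ 2 ≤ (2 * S * d) ^ 2 :=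
    pow_le_pow_left₀ (mul_nonneg (by linarith) (by linarith)) hrd 2
  have hg2 : g ^ 2 ≤ (2 * r) ^ 2 := pow_le_pow_left₀ (by linarith) (by linarith) 2
  have hgr2 : S * (g ^ 2 + r) ≤ (4 * S + 1) * r ^ 2 := by
    nlinarith [mul_le_mul_of_nonneg_left hg2 hS0.le,
      mul_le_mul_of_nonneg_right hr (by linarith : 0 ≤ r)]
  refine le_of_mul_le_mul_left ?_ hS0
  calc S * ((S - S₁) ^ 2 * (g ^ 2 + r)) = (S - S₁) ^ 2 * (S * (g ^ 2 + r)) := by ring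
    _ ≤ (S - S₁) ^ 2 * ((4 * S + 1) * r ^ 2) := by gcongr
    _ = (4 * S + 1) * ((S - S₁) * r) ^ 2 := by ring
    _ ≤ (4 * S + 1) * (2 * S * d) ^ 2 := by gcongr
    _ = S * (4 * S * (4 * S + 1) * d ^ 2) := by ring

theorem sq_add_le_four_mul_sq_add (hg : 0 ≤ g) (hrg : r ≤ g + s) (hgd : g ≤ d + S₁) :
    g ^ 2 + r ≤ 4 * d ^ 2 + (4 * S₁ ^ 2 + 1) + s := by
  nlinarith [sq_nonneg (d - S₁), sq_nonneg (g - 1)]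

variable {E : Type*} [NormedAddCommGroup E] [InnerProductSpace ℝ E] {e : E}

theorem exists_norm_sub_smul_sq_add_le {τ : ℝ} (hS₁ : 0 ≤ S₁) (hS : S₁ < S) (hτ : 0 < τ)
    (he : ‖e‖ = 1) : ∃ K, 0 < K ∧ ∀ (y w : E) (t : ℝ), 0 < t → S ≤ ‖y‖ → ‖w‖ ≤ S₁ →
      ‖y - (τ * t) • e‖ ^ 2 + ‖y‖ ≤ K * (‖y - (τ * t) • e - w‖ ^ 2 + t) := by
  have hδ : 0 < S - S₁ := by linarith
  have hS0 : 0 < S := by linarith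
  set K₁ := 4 * S * (4 * S + 1) / (S - S₁) ^ 2
  set K₂ := τ * (1 + 2 * (4 * S₁ ^ 2 + 1) / (S - S₁))
  have hK₁ : 0 ≤ K₁ := by positivity
  have hK₂ : 0 ≤ K₂ := by positivity
  refine ⟨K₁ + 4 + K₂, by positivity, fun y w t ht hy hw => ?_⟩
  have hs : ‖(τ * t) • e‖ = τ * t := by
    rw [norm_smul, he, mul_one, Real.norm_of_nonneg (by positivity)]
  have hrg := norm_le_norm_sub_add y ((τ * t) • e)
  have hgr := norm_sub_le y ((τ * t) • e)
  have hgd := (norm_le_norm_sub_add (y - (τ * t) • e) w).trans (by gcongr : _ ≤ _ + S₁)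
  rw [hs] at hrg hgr
  set g := ‖y - (τ * t) • e‖
  set d := ‖y - (τ * t) • e - w‖
  have hd : 0 ≤ d ^ 2 := sq_nonneg d
  rcases le_or_gt (2 * (τ * t)) (S - S₁) with hsmall | hlarge
  · have h := sq_add_le_mul_sq_of_small_shift hS₁ hS hy hrg hgr hgd hsmall
    have h' : g ^ 2 + ‖y‖ ≤ K₁ * d ^ 2 := by
      rw [div_mul_eq_mul_div, le_div_iff₀ (by positivity)]; linarith
    nlinarith
  · have h := sq_add_le_four_mul_sq_add (norm_nonneg _) hrg hgd
    have h' : 4 * S₁ ^ 2 + 1 ≤ 2 * (4 * S₁ ^ 2 + 1) / (S - S₁) * (τ * t) := by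
      rw [div_mul_eq_mul_div, le_div_iff₀ hδ]; nlinarith
    nlinarith

end Displacement

section Integrals

theorem integral_comp_sub_mul {F : Type*} [NormedAddCommGroup F] [NormedSpace ℝ F] (f : ℝ → F)
    (a : ℝ) {c : ℝ} (hc : 0 < c) : ∫ t, f (a - c * t) = c⁻¹ • ∫ u, f u := by
  rw [Measure.integral_comp_mul_left (fun u => f (a - u)), integral_sub_left_eq_self,
    abs_of_pos (inv_pos.mpr hc)]

theorem MeasureTheory.Integrable.comp_sub_mul {F : Type*} [NormedAddCommGroup F] {f : ℝ → F}
    (hf : Integrable f) (a : ℝ) {c : ℝ} (hc : c ≠ 0) : Integrable fun t => f (a - c * t) :=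
  (hf.comp_sub_left a).comp_mul_left' hc

variable {ν : ℝ}

theorem rpow_neg_le_mul_rpow_neg {L X Q : ℝ} (hν : 0 ≤ ν) (hL : 0 < L) (hQ : 0 < Q)
    (h : Q ≤ L * X) : X ^ (-ν) ≤ L ^ ν * Q ^ (-ν) := by
  have hX : 0 < X := pos_of_mul_pos_right (hQ.trans_le h) hL.le
  calc X ^ (-ν) = L ^ ν * (L * X) ^ (-ν) := by
        rw [Real.mul_rpow hL.le hX.le, Real.rpow_neg hL.le, ← mul_assoc,
          mul_inv_cancel₀ (Real.rpow_pos_of_pos hL ν).ne', one_mul]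
    _ ≤ L ^ ν * Q ^ (-ν) :=
        mul_le_mul_of_nonneg_left (Real.rpow_le_rpow_of_nonpos hQ h (by linarith)) (by positivity)

theorem rpow_neg_sq_add_eq {c : ℝ} (hc : 0 < c) (u : ℝ) :
    (u ^ 2 + c) ^ (-ν) = c ^ (-ν) * (1 + (u / √c) ^ 2) ^ (-ν) := by
  rw [← Real.mul_rpow hc.le (by positivity), mul_add, mul_one, div_pow, Real.sq_sqrt hc.le,
    mul_div_cancel₀ _ hc.ne', add_comm]

theorem integrable_one_add_sq_rpow_neg (hν : 1 / 2 < ν) :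
    Integrable fun u : ℝ => (1 + u ^ 2) ^ (-ν) := by
  have := integrable_rpow_neg_one_add_norm_sq (E := ℝ) (μ := volume) (r := 2 * ν)
    (by simp; linarith)
  convert this using 3 with u
  · simp
  · ring

theorem integral_one_add_sq_rpow_neg_pos (hν : 1 / 2 < ν) :
    0 < ∫ u : ℝ, (1 + u ^ 2) ^ (-ν) :=
  integral_pos_of_integrable_nonneg_nonzero (x := 0)
    ((by fun_prop : Continuous fun u : ℝ => 1 + u ^ 2).rpow_const fun u => Or.inl (by positivity))
    (integrable_one_add_sq_rpow_neg hν) (fun u => Real.rpow_nonneg (by positivity) _) (by simp)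

theorem integrable_sq_add_rpow_neg (hν : 1 / 2 < ν) {c : ℝ} (hc : 0 < c) :
    Integrable fun u : ℝ => (u ^ 2 + c) ^ (-ν) := by
  simp_rw [rpow_neg_sq_add_eq hc]
  exact ((integrable_one_add_sq_rpow_neg hν).comp_div (Real.sqrt_pos.mpr hc).ne').const_mul _

theorem integral_sq_add_rpow_neg {c : ℝ} (hc : 0 < c) :
    ∫ u : ℝ, (u ^ 2 + c) ^ (-ν) = c ^ (-ν + 1 / 2) * ∫ v : ℝ, (1 + v ^ 2) ^ (-ν) := by
  simp_rw [rpow_neg_sq_add_eq hc]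
  rw [integral_const_mul, Measure.integral_comp_div (fun v => (1 + v ^ 2) ^ (-ν)),
    abs_of_pos (Real.sqrt_pos.mpr hc), smul_eq_mul, ← mul_assoc, Real.sqrt_eq_rpow,
    ← Real.rpow_add hc]

end Integrals

theorem exists_setIntegral_rpow_neg_le {E : Type*} [NormedAddCommGroup E] [InnerProductSpace ℝ E]
    {e : E} {ν τ S₁ S : ℝ} (hν : 1 / 2 < ν) (hτ : 0 < τ) (hS₁ : 0 ≤ S₁) (hS : S₁ < S)
    (he : ‖e‖ = 1) :
    ∃ C, 0 < C ∧ ∀ (y : E) (w : ℝ → E), S ≤ ‖y‖ → (∀ t, ‖w t‖ ≤ S₁) →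
      ∫ t in Set.Ioi 0, (‖y - (τ * t) • e - w t‖ ^ 2 + t) ^ (-ν)
        ≤ C * (‖y‖ * (1 + τ * (‖y‖ - ⟪y, e⟫))) ^ (-ν + 1 / 2) := by
  obtain ⟨K, hK, hfar⟩ := exists_norm_sub_smul_sq_add_le hS₁ hS hτ he
  set L := (1 + 2 * τ) * K
  have hL : 0 < L := by positivity
  set I := ∫ v : ℝ, (1 + v ^ 2) ^ (-ν)
  refine ⟨L ^ ν * τ⁻¹ * I, by have := integral_one_add_sq_rpow_neg_pos hν; positivity,
    fun y w hy hw => ?_⟩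
  set P := ‖y‖ * (1 + τ * (‖y‖ - ⟪y, e⟫))
  have hP : 0 < P := by
    have : ⟪y, e⟫ ≤ ‖y‖ := (real_inner_le_norm y e).trans_eq (by rw [he, mul_one])
    have : 0 < ‖y‖ := by linarith
    positivity
  set f : ℝ → ℝ := fun u => L ^ ν * (u ^ 2 + P) ^ (-ν)
  have hf : Integrable fun t => f (⟪y, e⟫ - τ * t) :=
    ((integrable_sq_add_rpow_neg hν hP).const_mul _).comp_sub_mul _ hτ.ne'
  have hdominated : ∀ t ∈ Set.Ioi (0 : ℝ),
      (‖y - (τ * t) • e - w t‖ ^ 2 + t) ^ (-ν) ≤ f (⟪y, e⟫ - τ * t) := fun t ht =>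
    rpow_neg_le_mul_rpow_neg (by linarith) hL (add_pos_of_nonneg_of_pos (sq_nonneg _) hP) <|
      (sq_inner_sub_add_norm_mul_le he hτ.le (mul_pos hτ ht).le y).trans <| by
        rw [mul_assoc]; gcongr; exact hfar y (w t) t ht hy (hw t)
  calc ∫ t in Set.Ioi 0, (‖y - (τ * t) • e - w t‖ ^ 2 + t) ^ (-ν)
      ≤ ∫ t in Set.Ioi 0, f (⟪y, e⟫ - τ * t) :=
        integral_mono_of_nonneg
          (by filter_upwards [ae_restrict_mem measurableSet_Ioi] with t ht
              exact Real.rpow_nonneg (by positivity [ht.out.le]) _)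
          hf.integrableOn
          (by filter_upwards [ae_restrict_mem measurableSet_Ioi] with t ht
              exact hdominated t ht)
    _ ≤ ∫ t, f (⟪y, e⟫ - τ * t) :=
        setIntegral_le_integral hf (ae_of_all _ fun t => by positivity)
    _ = L ^ ν * τ⁻¹ * I * P ^ (-ν + 1 / 2) := by
        rw [integral_comp_sub_mul f _ hτ, integral_const_mul, integral_sq_add_rpow_neg hP,
          smul_eq_mul]
        ring

theorem time_integral_decay (ν τ S₁ S : ℝ) (hν : 1 < ν) (hτ : 0 < τ)
    (hS₁ : 0 < S₁) (hS : S₁ < S) (Ω : Matrix (Fin 3) (Fin 3) ℝ) (hΩ : Ωᵀ = -Ω) :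
    ∃ C : ℝ, 0 < C ∧ ∀ y z : EuclideanSpace ℝ (Fin 3), S ≤ ‖y‖ → ‖z‖ ≤ S₁ →
      (∫ t in Set.Ioi (0:ℝ),
          (‖y - (τ * t) • (EuclideanSpace.single 0 (1:ℝ))
             - toE3 ((exp (-(t • Ω))).mulVec z)‖ ^ 2 + t) ^ (-ν))
        ≤ C * (‖y‖ * sTau τ y) ^ (-ν + 1/2) := by
  obtain ⟨C, hC, hbound⟩ := exists_setIntegral_rpow_neg_le (ν := ν) (by linarith) hτ hS₁.le hS
    (e := EuclideanSpace.single (0 : Fin 3) (1 : ℝ)) (by simp)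
  refine ⟨C, hC, fun y z hy hz => ?_⟩
  have hsTau : sTau τ y = 1 + τ * (‖y‖ - ⟪y, EuclideanSpace.single 0 1⟫) := by
    simp [sTau, EuclideanSpace.inner_single_right]
  have hrot (t : ℝ) : ‖toE3 ((exp (-(t • Ω))).mulVec z)‖ ≤ S₁ := by
    have hskew : (-(t • Ω))ᵀ = -(-(t • Ω)) := by rw [transpose_neg, transpose_smul, hΩ, smul_neg]
    change ‖WithLp.toLp 2 _‖ ≤ S₁
    rwa [EuclideanSpace.norm_toLp_mulVec_of_transpose_mul_self
      (transpose_exp_mul_exp_of_transpose_eq_neg hskew)]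
  rw [hsTau]
  exact hbound y _ hy hrot
end

section
/- Let R > 0, τ > 0, k ∈ {0,1}, and let Ω ∈ ℝ^{3×3} be skew-symmetric. Then there is a constant C(R, τ, Ω) > 0 such that for all y, z ∈ B_R with y ≠ z: ∫₀^∞ (|y − τ t e₁ − e^{−tΩ} z|² + t)^{−3/2 − k/2} dt ≤ C(R, τ, Ω) · |y − z|^{−1−k}. -/
open NormedSpace MeasureTheory Matrix

open Set Filter Topology

/-!
The displacement `τ t e₁ + (e^{-tΩ} z - z)` has length at most `M t` for `t ≤ R / τ`, with `M`
depending only on `R, τ, Ω` (by `‖e^B - 1‖ ≤ ‖B‖ e^{‖B‖}`). Hence while `t ≤ |y - z| / (2M)`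
the point `y - τ t e₁ - e^{-tΩ} z` stays at distance at least `|y - z| / 2` from the origin;
afterwards the integrand is bounded by `t^e` alone. Since `|y - z| ≤ 2R`, both regimes give
`(|y - z|² + t) / c ≤ |y - τ t e₁ - e^{-tΩ} z|² + t` with `c` depending only on `R, τ, Ω`, and
`∫₀^∞ (a + t)^e dt = a^{e+1} / (-(e+1))` with `a = |y - z|²` produces the factor
`|y - z|^{2(e+1)} = |y - z|^{-1-k}`.
-/

theorem NormedSpace.norm_exp_sub_one_le {𝔸 : Type*} [NormedRing 𝔸] [NormedAlgebra ℝ 𝔸]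
    [CompleteSpace 𝔸] (x : 𝔸) : ‖exp x - 1‖ ≤ Real.exp ‖x‖ - 1 := by
  have hx := (hasSum_nat_add_iff' 1).mpr (exp_series_hasSum_exp' (𝕂 := ℝ) x)
  have hr := (hasSum_nat_add_iff' 1).mpr (exp_series_hasSum_exp' (𝕂 := ℝ) ‖x‖)
  simp only [Finset.range_one, Finset.sum_singleton, Nat.factorial_zero, Nat.cast_one, inv_one,
    pow_zero, one_smul] at hx hr
  rw [← Real.exp_eq_exp_ℝ] at hr
  refine hx.norm_le_of_bounded hr fun n => ?_
  rw [norm_smul, smul_eq_mul, Real.norm_of_nonneg (by positivity)]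
  exact mul_le_mul_of_nonneg_left (norm_pow_le' x n.succ_pos) (by positivity)

theorem Real.exp_sub_one_le_mul_exp (x : ℝ) : Real.exp x - 1 ≤ x * Real.exp x := by
  have h := mul_le_mul_of_nonneg_right (Real.one_sub_le_exp_neg x) (Real.exp_pos x).le
  rw [← Real.exp_add, neg_add_cancel, Real.exp_zero] at h
  linarith

theorem ContinuousLinearMap.norm_exp_apply_sub_le {E : Type*} [NormedAddCommGroup E]
    [NormedSpace ℝ E] [CompleteSpace E] (T : E →L[ℝ] E) (z : E) :
    ‖exp T z - z‖ ≤ ‖T‖ * Real.exp ‖T‖ * ‖z‖ :=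
  calc ‖exp T z - z‖ = ‖(exp T - 1) z‖ := rfl
    _ ≤ ‖exp T - 1‖ * ‖z‖ := (exp T - 1).le_opNorm z
    _ ≤ ‖T‖ * Real.exp ‖T‖ * ‖z‖ := by
      gcongr
      exact (norm_exp_sub_one_le T).trans (Real.exp_sub_one_le_mul_exp _)

theorem Matrix.toEuclideanCLM_exp {n : Type*} [Fintype n] [DecidableEq n] (A : Matrix n n ℝ) :
    toEuclideanCLM (𝕜 := ℝ) (exp A) = exp (toEuclideanCLM (𝕜 := ℝ) A) := by
  -- `exp` does not depend on the norm, so any normed algebra structure on matrices will do.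
  let _ := Matrix.linftyOpNormedRing (n := n) (α := ℝ)
  let _ := Matrix.linftyOpNormedAlgebra (n := n) (R := ℝ) (α := ℝ)
  let _ : NormedAlgebra ℚ (Matrix n n ℝ) := .restrictScalars ℚ ℝ _
  exact map_exp (toEuclideanCLM (𝕜 := ℝ) (n := n)) (LinearMap.continuous_of_finiteDimensional
    (toEuclideanCLM (𝕜 := ℝ) (n := n)).toAlgEquiv.toLinearEquiv.toLinearMap) A

theorem toE3_exp_mulVec (A : Matrix (Fin 3) (Fin 3) ℝ) (z : EuclideanSpace ℝ (Fin 3)) :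
    toE3 (exp A *ᵥ z) = exp (toEuclideanCLM (𝕜 := ℝ) A) z := by
  rw [← toEuclideanCLM_exp]
  rfl

theorem hasDerivAt_add_rpow_div {a e t : ℝ} (ht : 0 < a + t) (he : e + 1 ≠ 0) :
    HasDerivAt (fun s => (a + s) ^ (e + 1) / (e + 1)) ((a + t) ^ e) t := by
  have h := (((hasDerivAt_id' t).const_add a).rpow_const (p := e + 1) (Or.inl ht.ne')).div_const
    (e + 1)
  rwa [add_sub_cancel_right, one_mul, mul_div_cancel_left₀ _ he] at h

theorem tendsto_add_rpow_div_atTop (a : ℝ) {e : ℝ} (he : e < -1) :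
    Tendsto (fun s => (a + s) ^ (e + 1) / (e + 1)) atTop (𝓝 0) := by
  have h := (tendsto_rpow_neg_atTop (by linarith : 0 < -(e + 1))).comp
    (tendsto_atTop_add_const_left atTop a tendsto_id)
  simpa only [neg_neg, zero_div, Function.comp_def, id] using h.div_const (e + 1)

theorem integrableOn_Ioi_add_rpow {a e : ℝ} (ha : 0 < a) (he : e < -1) :
    IntegrableOn (fun t => (a + t) ^ e) (Ioi 0) :=
  integrableOn_Ioi_deriv_of_nonneg'
    (fun t ht => hasDerivAt_add_rpow_div (by linarith [mem_Ici.1 ht]) (by linarith))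
    (fun t ht => Real.rpow_nonneg (by linarith [mem_Ioi.1 ht]) e)
    (tendsto_add_rpow_div_atTop a he)

theorem integral_Ioi_add_rpow {a e : ℝ} (ha : 0 < a) (he : e < -1) :
    ∫ t in Ioi 0, (a + t) ^ e = -a ^ (e + 1) / (e + 1) := by
  rw [integral_Ioi_of_hasDerivAt_of_nonneg'
    (fun t ht => hasDerivAt_add_rpow_div (by linarith [mem_Ici.1 ht]) (by linarith))
    (fun t ht => Real.rpow_nonneg (by linarith [mem_Ioi.1 ht]) e)
    (tendsto_add_rpow_div_atTop a he)]
  simp [neg_div]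

theorem sq_add_div_le_sq_add {d r M D t : ℝ} (hM : 0 < M) (hd : 0 ≤ d) (hdD : d ≤ D)
    (ht : 0 ≤ t) (hr : t ≤ d / (2 * M) → d - M * t ≤ r) :
    (d ^ 2 + t) / (4 + 2 * M * D) ≤ r ^ 2 + t := by
  have hMD : 0 ≤ M * D := mul_nonneg hM.le (hd.trans hdD)
  rw [div_le_iff₀ (by linarith)]
  rcases le_or_gt t (d / (2 * M)) with hsmall | hlarge
  · have hMt : M * t ≤ d / 2 := by
      rw [le_div_iff₀ (by positivity)] at hsmall
      linarith
    have hr2 : d / 2 ≤ r := by linarith [hr hsmall]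
    nlinarith [pow_le_pow_left₀ (by positivity) hr2 2]
  · have hdMt : d < 2 * M * t := by
      rwa [div_lt_iff₀ (by positivity), mul_comm] at hlarge
    nlinarith [mul_le_mul_of_nonneg_left hdMt.le (hd.trans hdD), sq_nonneg r]

theorem integral_rpow_sq_add_le {r : ℝ → ℝ} {d M D e : ℝ} (hM : 0 < M) (hd : 0 < d)
    (hdD : d ≤ D) (he : e < -1) (hr : ∀ t, 0 < t → t ≤ d / (2 * M) → d - M * t ≤ r t) :
    ∫ t in Ioi 0, (r t ^ 2 + t) ^ e
      ≤ -(d ^ 2) ^ (e + 1) / (e + 1) / (4 + 2 * M * D) ^ e := by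
  have hc : 0 < 4 + 2 * M * D := by nlinarith
  have hpoint : ∀ t ∈ Ioi (0 : ℝ), (r t ^ 2 + t) ^ e ≤ (d ^ 2 + t) ^ e / (4 + 2 * M * D) ^ e := by
    intro t ht
    rw [← Real.div_rpow (by positivity [mem_Ioi.1 ht]) hc.le]
    exact Real.rpow_le_rpow_of_nonpos (by positivity [mem_Ioi.1 ht])
      (sq_add_div_le_sq_add hM hd.le hdD (le_of_lt ht) (hr t ht)) (by linarith)
  calc ∫ t in Ioi 0, (r t ^ 2 + t) ^ e
      ≤ ∫ t in Ioi 0, (d ^ 2 + t) ^ e / (4 + 2 * M * D) ^ e :=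
        setIntegral_mono_of_nonneg (fun t ht => Real.rpow_nonneg (by positivity [mem_Ioi.1 ht]) e)
          hpoint ((integrableOn_Ioi_add_rpow (by positivity) he).div_const _)
    _ = _ := by rw [integral_div, integral_Ioi_add_rpow (by positivity) he]

theorem sub_mul_le_norm_sub_smul_sub_exp {E : Type*} [NormedAddCommGroup E] [NormedSpace ℝ E]
    [CompleteSpace E] (T : E →L[ℝ] E) {u y z : E} {τ R t₀ t : ℝ} (hu : ‖u‖ ≤ 1) (hτ : 0 ≤ τ)
    (hz : ‖z‖ ≤ R) (ht : 0 ≤ t) (htt₀ : t ≤ t₀) :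
    ‖y - z‖ - (τ + ‖T‖ * Real.exp (‖T‖ * t₀) * R) * t ≤ ‖y - (τ * t) • u - exp (-(t • T)) z‖ := by
  have hdrift : ‖(τ * t) • u‖ ≤ τ * t := by
    rw [norm_smul, Real.norm_of_nonneg (by positivity)]
    exact mul_le_of_le_one_right (by positivity) hu
  have hnorm : ‖-(t • T)‖ = t * ‖T‖ := by rw [norm_neg, norm_smul, Real.norm_of_nonneg ht]
  have hrot : ‖exp (-(t • T)) z - z‖ ≤ ‖T‖ * Real.exp (‖T‖ * t₀) * R * t := by
    have h := (-(t • T)).norm_exp_apply_sub_le z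
    rw [hnorm] at h
    refine h.trans ?_
    have : Real.exp (t * ‖T‖) ≤ Real.exp (‖T‖ * t₀) :=
      Real.exp_le_exp.2 (by nlinarith [norm_nonneg T])
    calc t * ‖T‖ * Real.exp (t * ‖T‖) * ‖z‖ ≤ t * ‖T‖ * Real.exp (‖T‖ * t₀) * R := by gcongr
      _ = _ := by ring
  have htri : ‖y - z‖
      ≤ ‖y - (τ * t) • u - exp (-(t • T)) z‖ + ‖(τ * t) • u‖ + ‖exp (-(t • T)) z - z‖ :=
    calc ‖y - z‖ = ‖(y - (τ * t) • u - exp (-(t • T)) z) + (τ * t) • u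
          + (exp (-(t • T)) z - z)‖ := by congr 1; abel
      _ ≤ _ := norm_add₃_le
  linarith

theorem time_integral_local_general (R τ : ℝ) (hR : 0 < R) (hτ : 0 < τ) (k : ℝ)
    (hk : k = 0 ∨ k = 1) (Ω : Matrix (Fin 3) (Fin 3) ℝ) :
    ∃ C : ℝ, 0 < C ∧ ∀ y z : EuclideanSpace ℝ (Fin 3), ‖y‖ < R → ‖z‖ < R → y ≠ z →
      (∫ t in Set.Ioi (0:ℝ),
          (‖y - (τ * t) • (EuclideanSpace.single 0 (1:ℝ))
             - toE3 ((NormedSpace.exp (-(t • Ω))).mulVec z)‖ ^ 2 + t) ^ (-(3/2) - k/2))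
        ≤ C * ‖y - z‖ ^ (-1 - k) := by
  set e : ℝ := -(3/2) - k/2 with he_def
  have he : e < -1 := by rcases hk with rfl | rfl <;> norm_num [e]
  set T := toEuclideanCLM (𝕜 := ℝ) Ω
  set M := τ + ‖T‖ * Real.exp (‖T‖ * (R / τ)) * R
  have hτM : τ ≤ M := le_add_of_nonneg_right (by positivity)
  have hM : 0 < M := hτ.trans_le hτM
  refine ⟨-1 / (e + 1) / (4 + 2 * M * (2 * R)) ^ e,
    div_pos (div_pos_of_neg_of_neg (by norm_num) (by linarith)) (by positivity), ?_⟩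
  intro y z hy hz hyz
  have hd : 0 < ‖y - z‖ := norm_sub_pos_iff.2 hyz
  have hdR : ‖y - z‖ ≤ 2 * R := (norm_sub_le y z).trans (by linarith)
  have hdist : ∀ t, 0 < t → t ≤ ‖y - z‖ / (2 * M) → ‖y - z‖ - M * t
      ≤ ‖y - (τ * t) • EuclideanSpace.single 0 1 - toE3 (exp (-(t • Ω)) *ᵥ z)‖ := by
    intro t ht htd
    rw [toE3_exp_mulVec, map_neg, map_smul]
    refine sub_mul_le_norm_sub_smul_sub_exp T (by simp) hτ.le hz.le ht.le (htd.trans ?_)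
    rw [div_le_div_iff₀ (by positivity) hτ]
    nlinarith
  have hpow : (‖y - z‖ ^ 2) ^ (e + 1) = ‖y - z‖ ^ (-1 - k) := by
    rw [← Real.rpow_natCast, ← Real.rpow_mul hd.le, he_def]
    congr 1
    push_cast
    ring
  calc _ ≤ _ := integral_rpow_sq_add_le hM hd hdR he hdist
    _ = _ := by rw [hpow]; ring

theorem time_integral_local (R τ : ℝ) (hR : 0 < R) (hτ : 0 < τ) (k : ℝ)
    (hk : k = 0 ∨ k = 1) (Ω : Matrix (Fin 3) (Fin 3) ℝ) (hΩ : Ωᵀ = -Ω) :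
    ∃ C : ℝ, 0 < C ∧ ∀ y z : EuclideanSpace ℝ (Fin 3), ‖y‖ < R → ‖z‖ < R → y ≠ z →
      (∫ t in Set.Ioi (0:ℝ),
          (‖y - (τ * t) • (EuclideanSpace.single 0 (1:ℝ))
             - toE3 ((NormedSpace.exp (-(t • Ω))).mulVec z)‖ ^ 2 + t) ^ (-(3/2) - k/2))
        ≤ C * ‖y - z‖ ^ (-1 - k) :=
  time_integral_local_general R τ hR hτ k hk Ω
end
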